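/- Let G be a geometric random variable on {1,2,...} with success parameter p ∈ (0,1], i.e., Pr{G = k} = (1-p)^{k-1} p. Then for every real ρ > 0, the expectation E[binom(G+ρ-1, ρ)] = (1/p)^ρ, where binom(a,b) = Γ(a+1)/(Γ(b+1)Γ(a-b+1)) is the generalized binomial coefficient. -/

import Mathlib

/-!
For `n : ℕ`, `gammaBinom (n + ρ) ρ = Γ(n + ρ + 1) / (Γ(ρ + 1) n!)` is the multiset coefficient
`(ρ + 1)(ρ + 2)⋯(ρ + n) / n!`, i.e. the coefficient of `xⁿ` in the binomial series of
`(1 - x)^(-(ρ + 1))`. Summed against `(1 - p)ⁿ p` it therefore gives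
`p · p^(-(ρ + 1)) = p^(-ρ)`.
-/

/-- Generalized binomial coefficient via the Gamma function:
`binom a b = Γ(a+1) / (Γ(b+1) Γ(a-b+1))`. -/
noncomputable def gammaBinom (a b : ℝ) : ℝ :=
  Real.Gamma (a + 1) / (Real.Gamma (b + 1) * Real.Gamma (a - b + 1))

theorem Real.Gamma_add_nat_eq_ascPochhammer_eval_mul {z : ℝ} (hz : 0 < z) (n : ℕ) :
    Real.Gamma (z + n) = (ascPochhammer ℝ n).eval z * Real.Gamma z := by
  induction n with
  | zero => simp
  | succ n ih =>
    rw [Nat.cast_succ, ← add_assoc, Real.Gamma_add_one (by positivity : z + n ≠ 0), ih,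
      ascPochhammer_succ_eval]
    ring

theorem Ring.choose_add_nat_sub_one_eq_Gamma_div {a : ℝ} (ha : 0 < a) (n : ℕ) :
    Ring.choose (a + n - 1) n = Real.Gamma (a + n) / (Real.Gamma a * n.factorial) := by
  have h := Ring.factorial_nsmul_multichoose_eq_ascPochhammer a n
  rw [Ring.multichoose_eq, Polynomial.ascPochhammer_smeval_eq_eval, nsmul_eq_mul] at h
  rw [Real.Gamma_add_nat_eq_ascPochhammer_eval_mul ha, ← h]
  have := (Real.Gamma_pos_of_pos ha).ne'
  field_simp

theorem gammaBinom_nat_add_eq_choose {ρ : ℝ} (hρ : -1 < ρ) (n : ℕ) :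
    gammaBinom (n + ρ) ρ = Ring.choose (n + ρ) n := by
  have h := Ring.choose_add_nat_sub_one_eq_Gamma_div (a := ρ + 1) (by linarith) n
  rw [show ρ + 1 + n - 1 = n + ρ by ring] at h
  rw [h, gammaBinom, add_sub_cancel_right, Real.Gamma_nat_eq_factorial]
  ring_nf

theorem Real.hasSum_choose_mul_pow (a : ℝ) {x : ℝ} (hx : |x| < 1) :
    HasSum (fun n : ℕ ↦ Ring.choose (a + n - 1) n * x ^ n) (1 / (1 - x) ^ a) := by
  have h := (Real.one_div_one_sub_rpow_hasFPowerSeriesOnBall_zero a).hasSum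
    (y := x) (by simpa [enorm_eq_nnnorm, ← NNReal.coe_lt_one] using hx)
  simpa [FormalMultilinearSeries.ofScalars_apply_eq, mul_comm] using h

/-- For a geometric random variable `G` on `{1,2,...}` with parameter `p ∈ (0,1]`
(so `Pr{G = k+1} = (1-p)^k p`), and any real `ρ > 0`,
`E[binom(G+ρ-1, ρ)] = (1/p)^ρ`. -/
theorem geometric_generalized_binomial_moment (p ρ : ℝ)
    (hp : p ∈ Set.Ioc (0 : ℝ) 1) (hρ : 0 < ρ) :
    ∑' k : ℕ, ((1 - p) ^ k * p) * gammaBinom (((k : ℝ) + 1) + ρ - 1) ρ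
      = (1 / p) ^ ρ := by
  obtain ⟨hp0, hp1⟩ := hp
  have hx : |1 - p| < 1 := abs_lt.mpr ⟨by linarith, by linarith⟩
  have hsum := (Real.hasSum_choose_mul_pow (ρ + 1) hx).mul_left p
  rw [sub_sub_cancel] at hsum
  convert hsum.tsum_eq using 1
  · refine tsum_congr fun k ↦ ?_
    rw [show (k : ℝ) + 1 + ρ - 1 = k + ρ by ring, show ρ + 1 + k - 1 = k + ρ by ring,
      gammaBinom_nat_add_eq_choose (by linarith)]
    ring
  · rw [Real.rpow_add_one hp0.ne', Real.div_rpow zero_le_one hp0.le, Real.one_rpow]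
    field_simp
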